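/- arXiv:2510.08292 — 4 statements merged into one kernel-verified Lean document; each statement's English description precedes it below -/
import Mathlib

section
/- Let C be the adjacency matrix of a graph on vertex set {0,1}^n such that every vertex lies in the same number c_k of closed walks of length k, for all k (i.e., diag(C^k) = c_k I for all k ≥ 0). Then GW(C) = λ_max(C)/‖C‖, i.e., the Goemans–Williamson relaxation coincides with the spectral bound. -/
open Matrix
open Polynomial
open scoped ComplexOrder

set_option maxHeartbeats 1000000
set_option synthInstance.maxHeartbeats 400000

abbrev V (n : ℕ) := Fin n → Bool

noncomputable def ZA {n : ℕ} (A : Finset (Fin n)) : Matrix (V n) (V n) ℂ :=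
  Matrix.diagonal fun x => (-1 : ℂ) ^ (A.filter fun j => x j = true).card

/-- Operator (spectral) norm of a complex matrix. -/
noncomputable def opNorm {ι : Type*} [Fintype ι] [DecidableEq ι]
    (M : Matrix ι ι ℂ) : ℝ :=
  ‖Matrix.toEuclideanCLM (𝕜 := ℂ) M‖

/-- The relaxed Goemans–Williamson value `GW(C, S, ε)`. -/
noncomputable def gwVal {n : ℕ} (C : Matrix (V n) (V n) ℝ)
    (S : Set (Finset (Fin n))) (ε : ℝ) : ℝ :=
  sSup {t : ℝ | ∃ ρ : Matrix (V n) (V n) ℂ, ρ.PosSemidef ∧ ρ.trace = 1 ∧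
    (∀ A ∈ S, ‖(ZA A * ρ).trace‖ ≤ ε) ∧
    t = ((C.map Complex.ofReal * ρ).trace).re / opNorm (C.map Complex.ofReal)}

lemma GW_trace_diagonal_mul {ι : Type*} [Fintype ι] [DecidableEq ι]
    (d : ι → ℂ) (ρ : Matrix ι ι ℂ) :
    (Matrix.diagonal d * ρ).trace = ∑ i, d i * ρ i i := by
  simp [Matrix.trace, Matrix.diag, Matrix.mul_apply, Matrix.diagonal_apply,
    Finset.sum_ite_eq]

section conj
variable {ι : Type*} [Fintype ι] [DecidableEq ι]

lemma GW_conj_mul (U : Matrix ι ι ℂ) (hU : star U * U = 1) (g h : ι → ℂ) :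
    (U * Matrix.diagonal g * star U) * (U * Matrix.diagonal h * star U)
      = U * Matrix.diagonal (fun i => g i * h i) * star U := by
  have h1 : (U * Matrix.diagonal g * star U) * (U * Matrix.diagonal h * star U)
      = U * (Matrix.diagonal g * ((star U * U) * (Matrix.diagonal h * star U))) := by
    simp only [mul_assoc]
  rw [h1, hU, one_mul,
    show Matrix.diagonal g * (Matrix.diagonal h * star U)
        = Matrix.diagonal (fun i => g i * h i) * star U by
      rw [← mul_assoc, Matrix.diagonal_mul_diagonal],
    ← mul_assoc]

lemma GW_conj_pow (U : Matrix ι ι ℂ) (hU : star U * U = 1) (hU' : U * star U = 1)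
    (g : ι → ℂ) : ∀ k : ℕ,
    (U * Matrix.diagonal g * star U) ^ k = U * Matrix.diagonal (fun i => g i ^ k) * star U
  | 0 => by
      rw [pow_zero, show Matrix.diagonal (fun i : ι => g i ^ 0) = 1 by simp, mul_one, hU']
  | (k + 1) => by
      have h2 : (fun i => g i ^ (k + 1)) = fun i => g i ^ k * g i := by
        funext i; rw [pow_succ]
      rw [pow_succ, GW_conj_pow U hU hU' g k, GW_conj_mul U hU, h2]

lemma GW_conj_aeval (U : Matrix ι ι ℂ) (hU : star U * U = 1) (hU' : U * star U = 1)
    (g : ι → ℂ) (p : ℂ[X]) :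
    Polynomial.aeval (U * Matrix.diagonal g * star U) p
      = U * Matrix.diagonal (fun i => p.eval (g i)) * star U := by
  induction p using Polynomial.induction_on' with
  | add p q hp hq =>
      have h0 : (fun i => (p + q).eval (g i))
          = fun i => p.eval (g i) + q.eval (g i) := by
        funext i; simp
      rw [map_add, hp, hq, h0, ← Matrix.diagonal_add, Matrix.mul_add, Matrix.add_mul]
  | monomial n a =>
      have h2 : (fun i => Polynomial.eval (g i) (Polynomial.monomial n a))
          = a • fun i => g i ^ n := by
        funext i; simp [Polynomial.eval_monomial]
      rw [Polynomial.aeval_monomial, GW_conj_pow U hU hU' g n, h2, Matrix.diagonal_smul,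
        Matrix.mul_smul, Matrix.smul_mul, ← Algebra.smul_def]

end conj

lemma GW_charSum {n : ℕ} {A : Finset (Fin n)} (hA : A.Nonempty) :
    ∑ x : V n, (-1 : ℂ) ^ (A.filter fun j => x j = true).card = 0 := by
  obtain ⟨a, ha⟩ := hA
  apply Finset.sum_ninvolution (fun x => Function.update x a (!x a))
  · intro x
    by_cases hxa : x a = true
    · have h1 : (A.filter fun j => Function.update x a (!x a) j = true)
          = (A.filter fun j => x j = true).erase a := by
        ext j
        simp only [Finset.mem_erase, Finset.mem_filter, Function.update_apply]
        rcases eq_or_ne j a with rfl | hj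
        · simp [hxa]
        · simp [hj]
      have h2 : a ∈ A.filter fun j => x j = true := Finset.mem_filter.mpr ⟨ha, hxa⟩
      rw [h1, ← Finset.card_erase_add_one h2, pow_succ]
      ring
    · have h1 : (A.filter fun j => Function.update x a (!x a) j = true)
          = insert a (A.filter fun j => x j = true) := by
        ext j
        simp only [Finset.mem_insert, Finset.mem_filter, Function.update_apply]
        rcases eq_or_ne j a with rfl | hj
        · simp [hxa, ha]
        · simp [hj]
      have h2 : a ∉ A.filter fun j => x j = true := by
        simp [Finset.mem_filter, hxa]
      rw [h1, Finset.card_insert_of_notMem h2, pow_succ]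
      ring
  · intro x _ heq
    have := congrFun heq a
    simp [Function.update_self] at this
  · intro x; exact Finset.mem_univ _
  · intro x
    funext j
    rcases eq_or_ne j a with rfl | hj
    · simp [Function.update_apply]
    · simp [Function.update_apply, hj]

/-- Walk-regularity implies the Goemans–Williamson relaxation equals the spectral bound:
if the adjacency matrix `C` of a graph on `{0,1}ⁿ` has `diag(Cᵏ)` constant for every `k`,
then `GW(C) = λ_max(C)/‖C‖`. -/
theorem stmt_7 (n : ℕ) (C : Matrix (V n) (V n) ℝ) (hC0 : C ≠ 0) (hsymm : C.IsSymm)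
    (hadj : ∀ r s, C r s = 0 ∨ C r s = 1) (hdiag : ∀ r, C r r = 0)
    (hherm : (C.map Complex.ofReal).IsHermitian)
    (hwalk : ∀ k : ℕ, ∃ c : ℝ, ∀ r, (C ^ k) r r = c) :
    gwVal C {A | A.Nonempty} 0 =
      (⨆ i, hherm.eigenvalues i) / opNorm (C.map Complex.ofReal) := by
  classical
  set M : Matrix (V n) (V n) ℂ := C.map Complex.ofReal with hMdef
  set e : V n → ℝ := hherm.eigenvalues with he
  set U : Matrix (V n) (V n) ℂ := (hherm.eigenvectorUnitary : Matrix (V n) (V n) ℂ) with hUdef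
  have hU : star U * U = 1 := Matrix.mem_unitaryGroup_iff'.mp hherm.eigenvectorUnitary.2
  have hU' : U * star U = 1 := Matrix.mem_unitaryGroup_iff.mp hherm.eigenvectorUnitary.2
  have hspec : M = U * Matrix.diagonal (fun i => (e i : ℂ)) * star U := hherm.spectral_theorem
  -- the largest eigenvalue
  obtain ⟨i0, -, hi0⟩ := Finset.exists_max_image (Finset.univ : Finset (V n)) e
    ⟨fun _ => false, Finset.mem_univ _⟩
  have hbdd : BddAbove (Set.range e) := Set.Finite.bddAbove (Set.finite_range e)
  set lam : ℝ := ⨆ i, e i with hlamdef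
  have hlam_le : ∀ i, e i ≤ lam := fun i => le_ciSup hbdd i
  have hlam : lam = e i0 :=
    le_antisymm (ciSup_le fun i => hi0 i (Finset.mem_univ i)) (le_ciSup hbdd i0)
  -- walk regularity for powers of M
  have hMk : ∀ k : ℕ, M ^ k = (C ^ k).map Complex.ofReal := by
    intro k
    have h : ∀ B : Matrix (V n) (V n) ℝ,
        B.map Complex.ofReal = Complex.ofRealHom.mapMatrix B := fun _ => rfl
    rw [hMdef, h, h, ← map_pow]
  have hMkdiag : ∀ (k : ℕ) (r s : V n), (M ^ k) r r = (M ^ k) s s := by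
    intro k r s
    obtain ⟨c, hc⟩ := hwalk k
    rw [hMk k]
    show ((C ^ k) r r : ℂ) = ((C ^ k) s s : ℂ)
    rw [hc r, hc s]
  -- the top spectral projection
  set f : V n → ℂ := fun i => if e i = lam then 1 else 0 with hf
  set P : Matrix (V n) (V n) ℂ := U * Matrix.diagonal f * star U with hPdef
  have hPdiag : ∀ r s : V n, P r r = P s s := by
    intro r s
    set nodes : Finset ℂ := Finset.image (fun i : V n => (e i : ℂ)) Finset.univ with hnodes
    set vf : ℂ → ℂ := fun z => if z = (lam : ℂ) then 1 else 0 with hvf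
    set p : Polynomial ℂ := Lagrange.interpolate nodes id vf with hp
    have hnode : (fun i : V n => p.eval ((e i : ℂ))) = f := by
      funext i
      have hmem : ((e i : ℂ)) ∈ nodes := Finset.mem_image_of_mem _ (Finset.mem_univ i)
      have h2 := Lagrange.eval_interpolate_at_node vf (Set.injOn_id _) hmem
      have h3 : Polynomial.eval ((e i : ℂ)) p = vf ((e i : ℂ)) := by
        simpa only [id_eq] using h2
      rw [h3, hvf, hf]
      by_cases hi : e i = lam
      · simp [hi]
      · have h4 : ¬ (((e i : ℝ) : ℂ) = ((lam : ℝ) : ℂ)) := by exact_mod_cast hi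
        simp [hi, h4]
    have hPeq : P = Polynomial.aeval M p := by
      rw [hPdef, hspec, GW_conj_aeval U hU hU' _ p, hnode]
    rw [hPeq, Polynomial.aeval_eq_sum_range (p := p) M, Matrix.sum_apply, Matrix.sum_apply]
    refine Finset.sum_congr rfl fun k _ => ?_
    rw [Matrix.smul_apply, Matrix.smul_apply, hMkdiag k r s]
  -- trace of conjugated diagonal matrices
  have htrdiag : ∀ g : V n → ℂ, (U * Matrix.diagonal g * star U).trace = ∑ i, g i := by
    intro g
    rw [Matrix.trace_mul_comm, ← Matrix.mul_assoc, hU, Matrix.one_mul, Matrix.trace_diagonal]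
  set T : ℕ := (Finset.univ.filter fun i : V n => e i = lam).card with hT
  have hTpos : 0 < T :=
    Finset.card_pos.mpr ⟨i0, Finset.mem_filter.mpr ⟨Finset.mem_univ _, hlam.symm⟩⟩
  have hT0 : (T : ℝ) ≠ 0 := Nat.cast_ne_zero.mpr hTpos.ne'
  have htrP : P.trace = (T : ℂ) := by
    rw [hPdef, htrdiag f]
    simp [hf, hT]
  -- the optimal feasible state
  set g : V n → ℂ := fun i => (((T : ℝ)⁻¹ : ℝ) : ℂ) * f i with hg
  set ρ : Matrix (V n) (V n) ℂ := U * Matrix.diagonal g * star U with hρdef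
  have hρP : ρ = ((((T : ℝ)⁻¹ : ℝ) : ℂ)) • P := by
    rw [hρdef, hPdef, show Matrix.diagonal g
        = ((((T : ℝ)⁻¹ : ℝ) : ℂ)) • Matrix.diagonal f by
      rw [← Matrix.diagonal_smul]; rfl, Matrix.mul_smul, Matrix.smul_mul]
  have hρPSD : ρ.PosSemidef := by
    have hgpos : ∀ i, 0 ≤ g i := by
      intro i
      rw [hg]
      by_cases hi : e i = lam
      · simp only [hf, hi, if_pos rfl, if_true, mul_one]
        exact_mod_cast Complex.zero_le_real.mpr (inv_nonneg.mpr (Nat.cast_nonneg _))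
      · simp [hf, hi]
    have := (Matrix.posSemidef_diagonal_iff.mpr hgpos).mul_mul_conjTranspose_same U
    rw [hρdef]
    simpa [Matrix.star_eq_conjTranspose] using this
  have htrρ : ρ.trace = 1 := by
    rw [hρP, Matrix.trace_smul, htrP, smul_eq_mul,
      show ((T : ℕ) : ℂ) = (((T : ℕ) : ℝ) : ℂ) by push_cast; ring,
      ← Complex.ofReal_mul, inv_mul_cancel₀ hT0, Complex.ofReal_one]
  have hconstraint : ∀ A : Finset (Fin n), A.Nonempty → ((ZA A * ρ).trace) = 0 := by
    intro A hA
    have hZA : ZA A = Matrix.diagonal (fun x : V n =>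
        (-1 : ℂ) ^ (A.filter fun j => x j = true).card) := rfl
    rw [hZA, GW_trace_diagonal_mul]
    have hcd : ∀ x : V n, ρ x x = ρ i0 i0 := by
      intro x
      rw [hρP, Matrix.smul_apply, Matrix.smul_apply, hPdiag x i0]
    calc ∑ x : V n, (-1 : ℂ) ^ (A.filter fun j => x j = true).card * ρ x x
        = (∑ x : V n, (-1 : ℂ) ^ (A.filter fun j => x j = true).card) * ρ i0 i0 := by
          rw [Finset.sum_mul]
          exact Finset.sum_congr rfl fun x _ => by rw [hcd x]
      _ = 0 := by rw [GW_charSum hA, zero_mul]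
  have hsumg : ∑ i, g i = 1 := by
    have h1 := htrρ
    rw [hρdef, htrdiag g] at h1
    exact h1
  have hobj : (M * ρ).trace = (lam : ℂ) := by
    rw [hspec, hρdef, GW_conj_mul U hU, htrdiag]
    have heg : ∀ i, ((e i : ℂ)) * g i = ((lam : ℝ) : ℂ) * g i := by
      intro i
      by_cases hi : e i = lam
      · rw [hi]
      · simp [hg, hf, hi]
    rw [Finset.sum_congr rfl (fun i _ => heg i), ← Finset.mul_sum, hsumg, mul_one]
  -- upper bound for any feasible state
  have hub : ∀ ρ' : Matrix (V n) (V n) ℂ, ρ'.PosSemidef → ρ'.trace = 1 →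
      ((M * ρ').trace).re ≤ lam := by
    intro ρ' hpsd htr
    set σ : Matrix (V n) (V n) ℂ := star U * ρ' * U with hσdef
    have hσ : σ.PosSemidef := by
      have := hpsd.conjTranspose_mul_mul_same U
      rw [hσdef]
      simpa [Matrix.star_eq_conjTranspose] using this
    have hσd : ∀ i, 0 ≤ σ i i := by
      intro i
      exact hσ.diag_nonneg
    have htrσ : σ.trace = 1 := by
      rw [hσdef, Matrix.trace_mul_comm, ← Matrix.mul_assoc, hU', Matrix.one_mul, htr]
    have hMρ' : (M * ρ').trace = ∑ i, ((e i : ℂ)) * σ i i := by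
      rw [hspec,
        show U * Matrix.diagonal (fun i => (e i : ℂ)) * star U * ρ'
            = U * (Matrix.diagonal (fun i => (e i : ℂ)) * star U * ρ') by
          simp only [mul_assoc],
        Matrix.trace_mul_comm,
        show Matrix.diagonal (fun i => (e i : ℂ)) * star U * ρ' * U
            = Matrix.diagonal (fun i => (e i : ℂ)) * σ by
          rw [hσdef]; simp only [mul_assoc],
        GW_trace_diagonal_mul]
    have hre : ((M * ρ').trace).re = ∑ i, e i * (σ i i).re := by
      rw [hMρ', Complex.re_sum]
      exact Finset.sum_congr rfl fun i _ => Complex.re_ofReal_mul _ _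
    have h1sum : ∑ i, (σ i i).re = 1 := by
      have h2 := congrArg Complex.re htrσ
      rw [show σ.trace = ∑ i, σ i i from rfl, Complex.re_sum] at h2
      simpa using h2
    rw [hre]
    calc ∑ i, e i * (σ i i).re ≤ ∑ i, lam * (σ i i).re := by
          refine Finset.sum_le_sum fun i _ => ?_
          exact mul_le_mul_of_nonneg_right (hlam_le i)
            (by simpa using (Complex.le_def.mp (hσd i)).1)
      _ = lam := by rw [← Finset.mul_sum, h1sum, mul_one]
  -- positivity of the norm
  have hM0 : M ≠ 0 := by
    intro h
    apply hC0
    ext r s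
    have h2 := congrFun (congrFun h r) s
    simpa [hMdef, Matrix.map_apply] using h2
  have hnorm : 0 < opNorm M := by
    rw [opNorm, norm_pos_iff]
    intro h
    apply hM0
    simpa using congrArg (Matrix.toEuclideanCLM (𝕜 := ℂ)).symm h
  -- conclusion
  have hgreatest : IsGreatest {t : ℝ | ∃ ρ'' : Matrix (V n) (V n) ℂ, ρ''.PosSemidef ∧
      ρ''.trace = 1 ∧
      (∀ A ∈ {A : Finset (Fin n) | A.Nonempty}, ‖(ZA A * ρ'').trace‖ ≤ 0) ∧
      t = ((M * ρ'').trace).re / opNorm M} (lam / opNorm M) := by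
    constructor
    · refine ⟨ρ, hρPSD, htrρ, fun A hA => ?_, ?_⟩
      · rw [hconstraint A hA]; simp
      · rw [hobj, Complex.ofReal_re]
    · rintro t ⟨ρ'', h1, h2, h3, rfl⟩
      exact div_le_div_of_nonneg_right (hub ρ'' h1 h2) hnorm.le
  rw [gwVal]
  exact hgreatest.csSup_eq
end

section
/- Suppose diag(C^k) is a multiple of the identity for every k ≥ 0 and λ_max(C) is a simple eigenvalue of the symmetric matrix C ∈ ℝ^(2^n×2^n). Then the eigenvector v_max for λ_max, normalized to ℓ₂-norm √(2^n), has all entries of absolute value 1, i.e., it is a feasible point of the QUBO, and QUBO(C) = 2^n λ_max(C). -/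
open Matrix

/-- The QUBO optimal value. -/
noncomputable def qubo {D : Type*} [Fintype D] (C : Matrix D D ℝ) : ℝ :=
  sSup {t : ℝ | ∃ x : D → ℝ, (∀ i, x i = 1 ∨ x i = -1) ∧ t = x ⬝ᵥ C.mulVec x}

open Polynomial in
lemma aux_aeval_mulVec {D : Type*} [Fintype D] [DecidableEq D]
    (C : Matrix D D ℝ) (lam : ℝ) (v : D → ℝ) (hv : C.mulVec v = lam • v)
    (p : ℝ[X]) : (Polynomial.aeval C p).mulVec v = p.eval lam • v := by
  induction p using Polynomial.induction_on' with
  | add p q hp hq => rw [map_add, Matrix.add_mulVec, hp, hq, eval_add, add_smul]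
  | monomial k a =>
    have hk : ∀ k : ℕ, (C ^ k).mulVec v = lam ^ k • v := by
      intro k
      induction k with
      | zero => simp
      | succ k ih =>
        rw [pow_succ, ← Matrix.mulVec_mulVec, hv, Matrix.mulVec_smul, ih, pow_succ,
          smul_smul, mul_comm]

    rw [aeval_monomial, ← Algebra.smul_def, Matrix.smul_mulVec, hk, eval_monomial,
      smul_smul]

open Polynomial in
lemma aux_diag_aeval {D : Type*} [Fintype D] [DecidableEq D]
    (C : Matrix D D ℝ) (hwalk : ∀ k : ℕ, ∃ c : ℝ, ∀ r, (C ^ k) r r = c)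
    (p : ℝ[X]) : ∃ c : ℝ, ∀ r, (Polynomial.aeval C p) r r = c := by
  induction p using Polynomial.induction_on' with
  | add p q hp hq =>
    obtain ⟨c1, h1⟩ := hp; obtain ⟨c2, h2⟩ := hq
    exact ⟨c1 + c2, fun r => by rw [map_add, Matrix.add_apply, h1, h2]⟩
  | monomial k a =>
    obtain ⟨c, hc⟩ := hwalk k
    exact ⟨a * c, fun r => by
      rw [aeval_monomial, ← Algebra.smul_def, Matrix.smul_apply, hc, smul_eq_mul]⟩

open Polynomial in
lemma aux_aeval_conj {D : Type*} [Fintype D] [DecidableEq D]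
    (U M : Matrix D D ℝ) (h1 : star U * U = 1) (h2 : U * star U = 1)
    (p : ℝ[X]) : Polynomial.aeval (U * M * star U) p = U * Polynomial.aeval M p * star U := by
  induction p using Polynomial.induction_on' with
  | add p q hp hq => rw [map_add, map_add, hp, hq, Matrix.mul_add, Matrix.add_mul]
  | monomial k a =>
    have hk : ∀ k : ℕ, (U * M * star U) ^ k = U * M ^ k * star U := by
      intro k
      induction k with
      | zero => simpa using h2.symm
      | succ k ih =>
        rw [pow_succ, ih, pow_succ]
        simp only [Matrix.mul_assoc]
        rw [← Matrix.mul_assoc (star U) U, h1, Matrix.one_mul]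
    rw [aeval_monomial, aeval_monomial, ← Algebra.smul_def, ← Algebra.smul_def, hk,
      Matrix.mul_smul, Matrix.smul_mul]

open Polynomial in
lemma aux_aeval_diagonal {D : Type*} [Fintype D] [DecidableEq D] (d : D → ℝ) (p : ℝ[X]) :
    Polynomial.aeval (Matrix.diagonal d) p = Matrix.diagonal (fun j => p.eval (d j)) := by
  induction p using Polynomial.induction_on' with
  | add p q hp hq =>
    rw [map_add, hp, hq]
    ext i j
    by_cases h : i = j <;> simp [Matrix.diagonal_apply, h, eval_add]
  | monomial k a =>
    rw [aeval_monomial, ← Algebra.smul_def, Matrix.diagonal_pow]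
    ext i j
    by_cases h : i = j <;> simp [Matrix.diagonal_apply, h, eval_monomial]

/-- If `diag(Cᵏ)` is constant for all `k` and the largest eigenvalue `lam` of the symmetric
matrix `C` is simple, then any top eigenvector normalized to ℓ₂-norm `√(2ⁿ)` has all entries
of absolute value `1` (hence is a feasible QUBO point) and `QUBO(C) = 2ⁿ λ_max(C)`. -/
theorem stmt_8 (n : ℕ) (C : Matrix (V n) (V n) ℝ) (hsymm : C.IsSymm)
    (hwalk : ∀ k : ℕ, ∃ c : ℝ, ∀ r, (C ^ k) r r = c)
    (lam : ℝ)
    (hev : ∃ v : V n → ℝ, v ≠ 0 ∧ C.mulVec v = lam • v)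
    (hmax : ∀ (μ : ℝ) (v : V n → ℝ), v ≠ 0 → C.mulVec v = μ • v → μ ≤ lam)
    (hsimple : ∀ v w : V n → ℝ, C.mulVec v = lam • v → C.mulVec w = lam • w → v ≠ 0 →
      ∃ a : ℝ, w = a • v)
    (v : V n → ℝ) (hv : C.mulVec v = lam • v) (hnorm : ∑ i, v i ^ 2 = 2 ^ n) :
    (∀ i, |v i| = 1) ∧ qubo C = 2 ^ n * lam := by
  classical
  have hA : C.IsHermitian := by
    rw [Matrix.IsHermitian, Matrix.conjTranspose_eq_transpose_of_trivial]; exact hsymm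
  set U : Matrix (V n) (V n) ℝ := (hA.eigenvectorUnitary : Matrix (V n) (V n) ℝ) with hUdef
  set μ : V n → ℝ := hA.eigenvalues with hμdef
  have h1 : star U * U = 1 := Unitary.coe_star_mul_self _
  have h2 : U * star U = 1 := Unitary.coe_mul_star_self _
  have hspec : C = U * Matrix.diagonal μ * star U := by
    have h := hA.spectral_theorem
    rw [RCLike.ofReal_real_eq_id, Function.id_comp] at h
    exact h
  have hcol : ∀ j, C.mulVec (fun r => U r j) = μ j • (fun r => U r j) := by
    intro j
    have h := hA.mulVec_eigenvectorBasis j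
    have hc : (fun r => U r j) = ⇑(hA.eigenvectorBasis j) := by
      funext r; exact hA.eigenvectorUnitary_apply r j
    rw [hc]; exact h
  have hortho : ∀ i j, ∑ r, U r i * U r j = if i = j then (1:ℝ) else 0 := by
    intro i j
    have h := congrFun (congrFun h1 i) j
    simpa [Matrix.mul_apply, Matrix.star_apply, Matrix.one_apply] using h
  have hcol_ne : ∀ j, (fun r => U r j) ≠ 0 := by
    intro j h
    have h0 := hortho j j
    have hz : ∀ r, U r j = 0 := fun r => congrFun h r
    simp [hz] at h0
  have hvne : v ≠ 0 := by
    intro h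
    rw [h] at hnorm
    simp only [Pi.zero_apply] at hnorm
    have : (0:ℝ) = 2 ^ n := by simpa using hnorm
    have h2n : (0:ℝ) < 2 ^ n := by positivity
    linarith
  -- Lagrange interpolation polynomial
  set p : Polynomial ℝ := ∏ j ∈ Finset.univ.filter (fun j => μ j ≠ lam),
      (Polynomial.C ((lam - μ j)⁻¹) * (Polynomial.X - Polynomial.C (μ j))) with hpdef
  have hevall : p.eval lam = 1 := by
    rw [hpdef, Polynomial.eval_prod]
    apply Finset.prod_eq_one
    intro j hj
    simp only [Finset.mem_filter] at hj
    have hne : lam - μ j ≠ 0 := sub_ne_zero.mpr (Ne.symm hj.2)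
    simp [inv_mul_cancel₀ hne]
  have hevalμ : ∀ j, p.eval (μ j) = if μ j = lam then 1 else 0 := by
    intro j
    by_cases h : μ j = lam
    · rw [if_pos h, h]; exact hevall
    · rw [if_neg h, hpdef, Polynomial.eval_prod]
      apply Finset.prod_eq_zero (Finset.mem_filter.mpr ⟨Finset.mem_univ j, h⟩)
      simp
  have hPform : Polynomial.aeval C p
      = U * Matrix.diagonal (fun j => if μ j = lam then (1:ℝ) else 0) * star U := by
    conv_lhs => rw [hspec]
    rw [aux_aeval_conj U _ h1 h2 p, aux_aeval_diagonal]
    have hfe : (fun j => Polynomial.eval (μ j) p) = fun j => if μ j = lam then (1:ℝ) else 0 :=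
      funext hevalμ
    rw [hfe]
  have hex : ∃ j, μ j = lam := by
    by_contra h
    push_neg at h
    have hP0 : Polynomial.aeval C p = 0 := by
      rw [hPform]
      have he : (fun j => if μ j = lam then (1:ℝ) else 0) = fun _ => 0 := by
        funext j; simp [h j]
      rw [he]
      simp
    have hPv := aux_aeval_mulVec C lam v hv p
    rw [hP0, hevall, Matrix.zero_mulVec, one_smul] at hPv
    exact hvne hPv.symm
  obtain ⟨i₀, hi₀⟩ := hex
  have huniq : ∀ j, μ j = lam → j = i₀ := by
    intro j hj
    by_contra hne
    obtain ⟨a, ha⟩ := hsimple (fun r => U r i₀) (fun r => U r j)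
      (by rw [hcol i₀, hi₀]) (by rw [hcol j, hj]) (hcol_ne i₀)
    have h0 := hortho i₀ j
    rw [if_neg (fun h => hne (h.symm))] at h0
    have ha' : ∀ r, U r j = a * U r i₀ := fun r => congrFun ha r
    have hsum : ∑ r, U r i₀ * U r j = a * ∑ r, U r i₀ * U r i₀ := by
      rw [Finset.mul_sum]
      apply Finset.sum_congr rfl
      intro r _
      rw [ha' r]; ring
    rw [hsum] at h0
    have h11 := hortho i₀ i₀
    rw [if_pos rfl] at h11
    rw [h11, mul_one] at h0
    apply hcol_ne j
    funext r
    rw [ha' r, h0, zero_mul]; rfl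
  obtain ⟨c, hc⟩ := aux_diag_aeval C hwalk p
  have he : (fun j => if μ j = lam then (1:ℝ) else 0) = fun j => if j = i₀ then 1 else 0 := by
    funext j
    by_cases h : μ j = lam
    · rw [if_pos h, if_pos (huniq j h)]
    · rw [if_neg h, if_neg (fun hh => h (by rw [hh]; exact hi₀))]
  have hPrr : ∀ r, (U r i₀)^2 = c := by
    intro r
    have hcr := hc r
    rw [hPform, he] at hcr
    rw [← hcr]
    rw [Matrix.mul_apply]
    simp only [Matrix.mul_diagonal, Matrix.star_apply, star_trivial]
    rw [Finset.sum_eq_single i₀]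
    · rw [if_pos rfl]; ring
    · intro j _ hj; rw [if_neg hj]; ring
    · intro h; exact absurd (Finset.mem_univ i₀) h
  have hcard : (Fintype.card (V n) : ℝ) = 2 ^ n := by
    simp [Fintype.card_fun]
  have hsumcol : ∑ r, (U r i₀)^2 = 1 := by
    have h := hortho i₀ i₀
    rw [if_pos rfl] at h
    rw [← h]
    apply Finset.sum_congr rfl
    intro r _; ring
  have hc1 : (2:ℝ)^n * c = 1 := by
    have : ∑ r : V n, (U r i₀)^2 = ∑ r : V n, c := Finset.sum_congr rfl (fun r _ => hPrr r)
    rw [hsumcol, Finset.sum_const, nsmul_eq_mul, Finset.card_univ, hcard] at this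
    linarith
  obtain ⟨a, ha⟩ := hsimple (fun r => U r i₀) v (by rw [hcol i₀, hi₀]) hv (hcol_ne i₀)
  have ha' : ∀ r, v r = a * U r i₀ := fun r => congrFun ha r
  have ha2 : a ^ 2 = 2 ^ n := by
    have : ∑ i, v i ^ 2 = a^2 * ∑ r, (U r i₀)^2 := by
      rw [Finset.mul_sum]
      apply Finset.sum_congr rfl
      intro r _
      rw [ha' r]; ring
    rw [hnorm, hsumcol, mul_one] at this
    exact this.symm
  have hvsq : ∀ i, v i ^ 2 = 1 := by
    intro i
    have : v i ^ 2 = a^2 * (U i i₀)^2 := by rw [ha' i]; ring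
    rw [this, ha2, hPrr i]
    exact hc1
  have habs : ∀ i, |v i| = 1 := by
    intro i
    nlinarith [abs_nonneg (v i), sq_abs (v i), hvsq i]
  refine ⟨habs, ?_⟩
  have hub : ∀ x : V n → ℝ, (∀ i, x i = 1 ∨ x i = -1) → x ⬝ᵥ C.mulVec x ≤ 2^n * lam := by
    intro x hx
    set y : V n → ℝ := fun j => ∑ r, x r * U r j with hydef
    have hxy : x ᵥ* U = y := by
      funext j
      simp [Matrix.vecMul, dotProduct, hydef]
    have hxy' : star U *ᵥ x = y := by
      funext j
      simp [Matrix.mulVec, dotProduct, Matrix.star_apply, hydef, mul_comm]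
    have hsumx : ∑ r, x r ^ 2 = (2:ℝ)^n := by
      have hx1 : ∀ r, x r ^ 2 = 1 := by
        intro r; rcases hx r with h | h <;> rw [h] <;> norm_num
      rw [Finset.sum_congr rfl (fun r _ => hx1 r), Finset.sum_const, nsmul_eq_mul, mul_one,
        Finset.card_univ, hcard]
    have hval : x ⬝ᵥ C.mulVec x = ∑ j, μ j * y j ^ 2 := by
      conv_lhs => rw [hspec]
      rw [← Matrix.mulVec_mulVec, ← Matrix.mulVec_mulVec, Matrix.dotProduct_mulVec, hxy, hxy']
      simp only [dotProduct, Matrix.mulVec_diagonal]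
      apply Finset.sum_congr rfl
      intro j _; ring
    have hynorm : ∑ j, y j ^ 2 = (2:ℝ)^n := by
      have hyy : y ⬝ᵥ y = x ⬝ᵥ x := by
        have hstep : (x ᵥ* U) ⬝ᵥ (star U *ᵥ x) = x ⬝ᵥ x := by
          rw [← Matrix.dotProduct_mulVec, Matrix.mulVec_mulVec, h2, Matrix.one_mulVec]
        rw [hxy, hxy'] at hstep
        exact hstep
      have h3 : ∑ j, y j ^ 2 = y ⬝ᵥ y := by
        simp only [dotProduct]; apply Finset.sum_congr rfl; intro j _; ring
      have h4 : x ⬝ᵥ x = ∑ r, x r ^ 2 := by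
        simp only [dotProduct]; apply Finset.sum_congr rfl; intro r _; ring
      rw [h3, hyy, h4, hsumx]
    calc x ⬝ᵥ C.mulVec x = ∑ j, μ j * y j ^ 2 := hval
      _ ≤ ∑ j, lam * y j ^ 2 := Finset.sum_le_sum (fun j _ =>
          mul_le_mul_of_nonneg_right (hmax (μ j) _ (hcol_ne j) (hcol j)) (sq_nonneg _))
      _ = lam * ∑ j, y j ^ 2 := by rw [← Finset.mul_sum]
      _ = 2^n * lam := by rw [hynorm, mul_comm]
  have hmem : (2:ℝ)^n * lam ∈
      {t : ℝ | ∃ x : V n → ℝ, (∀ i, x i = 1 ∨ x i = -1) ∧ t = x ⬝ᵥ C.mulVec x} := by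
    refine ⟨v, fun i => ?_, ?_⟩
    · rcases abs_eq (le_of_lt one_pos) |>.mp (habs i) with h | h
      · exact Or.inl h
      · exact Or.inr h
    · rw [hv]
      have : v ⬝ᵥ (lam • v) = lam * ∑ i, v i ^ 2 := by
        simp only [dotProduct, Pi.smul_apply, smul_eq_mul, Finset.mul_sum]
        apply Finset.sum_congr rfl
        intro i _; ring
      rw [this, hnorm, mul_comm]
  rw [qubo]
  apply le_antisymm
  · apply csSup_le ⟨_, hmem⟩
    rintro t ⟨x, hx, rfl⟩
    exact hub x hx
  · exact le_csSup ⟨2^n * lam, by rintro t ⟨x, hx, rfl⟩; exact hub x hx⟩ hmem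
end

section
/- For density matrices ρ, σ on ℂ^{2^n}, the trace norm is bounded by the Hilbert–Schmidt norm as ‖ρ − σ‖_tr ≤ 2^{n/2} ‖ρ − σ‖₂; moreover, if M denotes the dephasing (measurement) channel in the computational basis and ρ satisfies |tr(Z_A ρ)| ≤ ε for all Z_A in a set of 2^k − 1 traceless Pauli-Z strings forming (together with I) a group, and tr(Z_B ρ) = 0 for all other nonidentity Z strings, then ‖M(ρ) − I/2^n‖₂² ≤ 2^{-n}(2^k − 1)ε², and consequently ‖M(ρ) − I/2^n‖_tr ≤ (2^k − 1)^{1/2} ε. -/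
open Matrix
open scoped ComplexOrder
open scoped symmDiff

/-- The trace norm (sum of singular values) of a complex matrix. -/
noncomputable def traceNorm {ι : Type*} [Fintype ι] [DecidableEq ι]
    (M : Matrix ι ι ℂ) : ℝ :=
  ∑ i, Real.sqrt ((Matrix.isHermitian_mul_conjTranspose_self M).eigenvalues i)

/-- The Hilbert–Schmidt (Frobenius) norm of a complex matrix. -/
noncomputable def hsNorm {ι : Type*} [Fintype ι] (M : Matrix ι ι ℂ) : ℝ :=
  Real.sqrt (∑ i, ∑ j, ‖M i j‖ ^ 2)

/-- The dephasing (computational-basis measurement) channel `M(ρ) = Σᵢ ⟨i|ρ|i⟩ |i⟩⟨i|`. -/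
noncomputable def dephase {ι : Type*} [Fintype ι] [DecidableEq ι]
    (ρ : Matrix ι ι ℂ) : Matrix ι ι ℂ :=
  Matrix.diagonal fun i => ρ i i

/-! ### Auxiliary lemmas -/

section Aux

lemma aux_sum_eigenvalues_eq_trace {ι : Type*} [Fintype ι] [DecidableEq ι]
    {A : Matrix ι ι ℂ} (hA : A.IsHermitian) :
    (∑ i, (hA.eigenvalues i : ℂ)) = A.trace := by
  exact hA.trace_eq_sum_eigenvalues.symm

lemma aux_trace_mul_conjTranspose_self {ι : Type*} [Fintype ι]
    (M : Matrix ι ι ℂ) :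
    (M * Mᴴ).trace = ((∑ i, ∑ j, ‖M i j‖ ^ 2 : ℝ) : ℂ) := by
  simp only [Matrix.trace, Matrix.diag_apply, Matrix.mul_apply, Matrix.conjTranspose_apply,
    RCLike.star_def, Complex.mul_conj, Complex.sq_norm]
  push_cast
  rfl

/-- Part 1 in general form. -/
lemma aux_traceNorm_le {ι : Type*} [Fintype ι] [DecidableEq ι] (M : Matrix ι ι ℂ) :
    traceNorm M ≤ Real.sqrt (Fintype.card ι) * hsNorm M := by
  classical
  set h := Matrix.isHermitian_mul_conjTranspose_self M with hh
  have hnn : ∀ i, 0 ≤ h.eigenvalues i := fun i =>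
    (Matrix.posSemidef_self_mul_conjTranspose M).eigenvalues_nonneg i
  have hsum : ∑ i, h.eigenvalues i = ∑ i, ∑ j, ‖M i j‖ ^ 2 := by
    have h1 := aux_sum_eigenvalues_eq_trace h
    rw [aux_trace_mul_conjTranspose_self] at h1
    exact_mod_cast h1
  have key : (∑ i, Real.sqrt (h.eigenvalues i)) ^ 2
      ≤ (Fintype.card ι) * ∑ i, h.eigenvalues i := by
    have h2 := sq_sum_le_card_mul_sum_sq
      (s := (Finset.univ : Finset ι)) (f := fun i => Real.sqrt (h.eigenvalues i))
    have h3 : ∀ i : ι, Real.sqrt (h.eigenvalues i) ^ 2 = h.eigenvalues i := fun i =>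
      Real.sq_sqrt (hnn i)
    simpa [h3, Finset.card_univ] using h2
  have h0 : 0 ≤ ∑ i, Real.sqrt (h.eigenvalues i) :=
    Finset.sum_nonneg fun i _ => Real.sqrt_nonneg _
  calc traceNorm M = Real.sqrt ((∑ i, Real.sqrt (h.eigenvalues i)) ^ 2) := by
        rw [Real.sqrt_sq h0]; rfl
    _ ≤ Real.sqrt ((Fintype.card ι) * ∑ i, h.eigenvalues i) := Real.sqrt_le_sqrt key
    _ = Real.sqrt (Fintype.card ι) * hsNorm M := by
        rw [Real.sqrt_mul (by positivity), hsNorm, hsum]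

/-! ### Fourier analysis on the Boolean cube -/

/-- The character `χ_A(x) = (-1)^{|A ∩ x|}`. -/
noncomputable def chi {n : ℕ} (A : Finset (Fin n)) (x : V n) : ℂ :=
  (-1 : ℂ) ^ (A.filter fun j => x j = true).card

lemma conj_chi {n : ℕ} (A : Finset (Fin n)) (x : V n) :
    (starRingEnd ℂ) (chi A x) = chi A x := by
  simp [chi]

lemma chi_empty {n : ℕ} (x : V n) : chi (∅ : Finset (Fin n)) x = 1 := by
  simp [chi]

/-- A sum over a type with a sign-reversing involution vanishes. -/
lemma aux_sum_eq_zero_of_neg {α : Type*} [Fintype α] (g : α → ℂ) (e : α ≃ α)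
    (h : ∀ a, g (e a) = -g a) : ∑ a, g a = 0 := by
  have h1 : ∑ a, g a = ∑ a, g (e a) := (Equiv.sum_comp e g).symm
  have h2 : ∑ a, g (e a) = -∑ a, g a := by
    rw [← Finset.sum_neg_distrib]
    exact Finset.sum_congr rfl fun a _ => h a
  have h3 : ∑ a, g a + ∑ a, g a = 0 := by
    nth_rewrite 2 [h1]
    rw [h2]; ring
  exact add_self_eq_zero.mp h3

/-- Toggling one element flips the parity sign. -/
lemma aux_neg_one_pow_symmDiff {m : Type*} [DecidableEq m] (B : Finset m) (j : m) :
    (-1 : ℂ) ^ (B ∆ {j}).card = -(-1 : ℂ) ^ B.card := by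
  by_cases hj : j ∈ B
  · have hB : B ∆ {j} = B.erase j := by
      ext i
      simp only [Finset.mem_symmDiff, Finset.mem_singleton, Finset.mem_erase]
      constructor
      · rintro (⟨h1, h2⟩ | ⟨h1, h2⟩)
        · exact ⟨h2, h1⟩
        · exact absurd (h1 ▸ hj) h2
      · rintro ⟨h1, h2⟩; exact Or.inl ⟨h2, h1⟩
    obtain ⟨c, hc⟩ : ∃ c, B.card = c + 1 :=
      ⟨B.card - 1, (Nat.succ_pred_eq_of_pos (Finset.card_pos.mpr ⟨j, hj⟩)).symm⟩
    rw [hB, Finset.card_erase_of_mem hj, hc, Nat.add_sub_cancel, pow_succ]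
    ring
  · have hB : B ∆ {j} = insert j B := by
      ext i
      simp only [Finset.mem_symmDiff, Finset.mem_singleton, Finset.mem_insert]
      constructor
      · rintro (⟨h1, h2⟩ | ⟨h1, h2⟩)
        · exact Or.inr h1
        · exact Or.inl h1
      · rintro (rfl | h1)
        · exact Or.inr ⟨rfl, hj⟩
        · exact Or.inl ⟨h1, fun h => hj (h ▸ h1)⟩
    rw [hB, Finset.card_insert_of_notMem hj, pow_succ]
    ring

/-- The bit-flip equivalence at coordinate `j`. -/
def flipEquiv {n : ℕ} (j : Fin n) : V n ≃ V n where
  toFun x := Function.update x j (!x j)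
  invFun x := Function.update x j (!x j)
  left_inv x := by
    funext i
    rcases eq_or_ne i j with rfl | h
    · simp
    · simp [Function.update_of_ne h]
  right_inv x := by
    funext i
    rcases eq_or_ne i j with rfl | h
    · simp
    · simp [Function.update_of_ne h]

/-- Core orthogonality over `x`. -/
lemma aux_sum_x {n : ℕ} (S : Finset (Fin n)) :
    ∑ x : V n, (-1 : ℂ) ^ (S.filter fun j => x j = true).card
      = if S = ∅ then (2 : ℂ) ^ n else 0 := by
  split_ifs with hS
  · subst hS
    simp only [Finset.filter_empty, Finset.card_empty, pow_zero]
    simp [Finset.card_univ]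
  · obtain ⟨j, hj⟩ := Finset.nonempty_iff_ne_empty.mpr hS
    apply aux_sum_eq_zero_of_neg _ (flipEquiv j)
    intro x
    have key : (S.filter fun i => (flipEquiv j x) i = true)
        = (S.filter fun i => x i = true) ∆ {j} := by
      ext i
      rw [Finset.mem_filter]
      rcases eq_or_ne i j with rfl | h
      · simp only [flipEquiv, Equiv.coe_fn_mk, Function.update_self, Finset.mem_filter,
          Finset.mem_symmDiff, Finset.mem_singleton]
        cases hx : x i <;> simp [hx, hj]
      · simp only [flipEquiv, Equiv.coe_fn_mk, Function.update_of_ne h, Finset.mem_filter,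
          Finset.mem_symmDiff, Finset.mem_singleton, h]
        tauto
    show (-1 : ℂ) ^ (S.filter fun i => (flipEquiv j x) i = true).card = _
    rw [key, aux_neg_one_pow_symmDiff]

/-- Core orthogonality over `A`. -/
lemma aux_sum_A {n : ℕ} (T : Finset (Fin n)) :
    ∑ A : Finset (Fin n), (-1 : ℂ) ^ (A ∩ T).card
      = if T = ∅ then (2 : ℂ) ^ n else 0 := by
  split_ifs with hT
  · subst hT
    simp only [Finset.inter_empty, Finset.card_empty, pow_zero]
    simp [Finset.card_univ, Fintype.card_finset]
  · obtain ⟨j, hj⟩ := Finset.nonempty_iff_ne_empty.mpr hT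
    apply aux_sum_eq_zero_of_neg _
      (⟨fun A => A ∆ {j}, fun A => A ∆ {j},
       fun A => symmDiff_symmDiff_cancel_right {j} A,
       fun A => symmDiff_symmDiff_cancel_right {j} A⟩ : Finset (Fin n) ≃ Finset (Fin n))
    intro A
    show (-1 : ℂ) ^ ((A ∆ {j}) ∩ T).card = -(-1 : ℂ) ^ (A ∩ T).card
    have h1 : (A ∆ {j}) ∩ T = (A ∩ T) ∆ {j} := by
      ext i
      simp only [Finset.mem_inter, Finset.mem_symmDiff, Finset.mem_singleton]
      rcases eq_or_ne i j with rfl | h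
      · simp [hj]
      · simp [h]
    rw [h1, aux_neg_one_pow_symmDiff]

lemma aux_parity {m : Type*} [DecidableEq m] (s t : Finset m) :
    (-1 : ℂ) ^ s.card * (-1 : ℂ) ^ t.card = (-1 : ℂ) ^ (s ∆ t).card := by
  have hdisj : Disjoint (s ∆ t) (s ∩ t) := by
    have := disjoint_symmDiff_inf (a := s) (b := t)
    simpa [Finset.inf_eq_inter] using this
  have hunion : (s ∆ t) ∪ (s ∩ t) = s ∪ t := by
    have := symmDiff_sup_inf (a := s) (b := t)
    simpa [Finset.sup_eq_union, Finset.inf_eq_inter] using this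
  have hcard : (s ∆ t).card + (s ∩ t).card = (s ∪ t).card := by
    rw [← Finset.card_union_of_disjoint hdisj, hunion]
  have hcard2 : s.card + t.card = (s ∆ t).card + 2 * (s ∩ t).card := by
    have := Finset.card_union_add_card_inter s t
    omega
  rw [← pow_add, hcard2, pow_add, pow_mul]
  simp

lemma chi_mul_chi {n : ℕ} (A B : Finset (Fin n)) (x : V n) :
    chi A x * chi B x = (-1 : ℂ) ^ (((A ∆ B).filter fun j => x j = true)).card := by
  rw [chi, chi, aux_parity]
  have hset : (A.filter fun j => x j = true) ∆ (B.filter fun j => x j = true)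
      = (A ∆ B).filter fun j => x j = true := by
    ext i
    simp only [Finset.mem_symmDiff, Finset.mem_filter]
    tauto
  rw [hset]

/-- Forward orthogonality. -/
lemma chi_orth {n : ℕ} (A B : Finset (Fin n)) :
    ∑ x : V n, chi A x * chi B x = if A = B then (2 : ℂ) ^ n else 0 := by
  simp only [chi_mul_chi]
  rw [aux_sum_x]
  refine if_congr ?_ rfl rfl
  rw [← Finset.bot_eq_empty]
  exact symmDiff_eq_bot

/-- Dual orthogonality. -/
lemma chi_orth' {n : ℕ} (x y : V n) :
    ∑ A : Finset (Fin n), chi A x * chi A y = if x = y then (2 : ℂ) ^ n else 0 := by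
  classical
  set T : Finset (Fin n) := Finset.univ.filter (fun i => x i ≠ y i) with hT
  have key : ∀ A : Finset (Fin n), chi A x * chi A y = (-1 : ℂ) ^ (A ∩ T).card := by
    intro A
    rw [chi, chi, aux_parity]
    have hset : (A.filter fun j => x j = true) ∆ (A.filter fun j => y j = true) = A ∩ T := by
      ext i
      simp only [Finset.mem_symmDiff, Finset.mem_filter, Finset.mem_inter, hT,
        Finset.mem_univ, true_and]
      cases hx : x i <;> cases hy : y i <;> simp [hx, hy]
    rw [hset]
  simp only [key]
  rw [aux_sum_A]
  refine if_congr ?_ rfl rfl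
  simp [hT, Finset.filter_eq_empty_iff, funext_iff]

/-- Fourier inversion. -/
lemma aux_inversion {n : ℕ} (g : V n → ℂ) (x : V n) :
    ∑ A : Finset (Fin n), (∑ y, chi A y * g y) * chi A x = (2 : ℂ) ^ n * g x := by
  have h1 : ∀ A : Finset (Fin n), (∑ y, chi A y * g y) * chi A x
      = ∑ y, g y * (chi A x * chi A y) := by
    intro A
    rw [Finset.sum_mul]
    exact Finset.sum_congr rfl fun y _ => by ring
  simp only [h1]
  rw [Finset.sum_comm]
  have h2 : ∀ y : V n, ∑ A : Finset (Fin n), g y * (chi A x * chi A y)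
      = g y * (if x = y then (2 : ℂ) ^ n else 0) := by
    intro y
    rw [← Finset.mul_sum, chi_orth']
  simp only [h2, mul_ite, mul_zero]
  rw [Finset.sum_ite_eq]
  simp [mul_comm]
end Aux

/-- Trace norm vs Hilbert–Schmidt norm, and the bound on the dephased state: if the `2ᵏ − 1`
nontrivial Pauli-Z strings of a group `G` have expectations at most `ε` in modulus on `ρ`,
and all other nontrivial Z-strings have zero expectation, then
`‖M(ρ) − I/2ⁿ‖₂² ≤ 2⁻ⁿ(2ᵏ−1)ε²` and `‖M(ρ) − I/2ⁿ‖_tr ≤ (2ᵏ−1)^{1/2} ε`. -/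
theorem stmt_11 (n k : ℕ) (ρ σ : Matrix (V n) (V n) ℂ)
    (hρ : ρ.PosSemidef) (hσ : σ.PosSemidef) (hρt : ρ.trace = 1) (hσt : σ.trace = 1)
    (ε : ℝ) (hε : 0 ≤ ε)
    (G : Finset (Finset (Fin n))) (hGcard : G.card = 2 ^ k) (hGe : ∅ ∈ G)
    (hGmul : ∀ A ∈ G, ∀ B ∈ G, (A \ B) ∪ (B \ A) ∈ G)
    (hin : ∀ A ∈ G, A ≠ ∅ → ‖(ZA A * ρ).trace‖ ≤ ε)
    (hout : ∀ B : Finset (Fin n), B ∉ G → B ≠ ∅ → (ZA B * ρ).trace = 0) :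
    traceNorm (ρ - σ) ≤ Real.sqrt (2 ^ n) * hsNorm (ρ - σ) ∧
    hsNorm (dephase ρ - ((2 : ℂ) ^ n)⁻¹ • 1) ^ 2 ≤ ((2 : ℝ) ^ n)⁻¹ * (2 ^ k - 1) * ε ^ 2 ∧
    traceNorm (dephase ρ - ((2 : ℂ) ^ n)⁻¹ • 1) ≤ Real.sqrt (2 ^ k - 1) * ε := by
  classical
  have hcard : (Fintype.card (V n) : ℝ) = (2 : ℝ) ^ n := by
    simp [V]
  have h2n : (2 : ℂ) ^ n ≠ 0 := pow_ne_zero _ two_ne_zero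
  -- Part 1
  have part1 : traceNorm (ρ - σ) ≤ Real.sqrt (2 ^ n) * hsNorm (ρ - σ) := by
    have := aux_traceNorm_le (ρ - σ)
    rwa [hcard] at this
  refine ⟨part1, ?_⟩
  -- setup for part 2
  set c : Finset (Fin n) → ℂ := fun A => ∑ y, chi A y * ρ y y with hc
  set f : V n → ℂ := fun x => ρ x x - ((2 : ℂ) ^ n)⁻¹ with hf
  set U : Finset (Finset (Fin n)) := Finset.univ.erase ∅ with hU
  have htrace : ∀ A : Finset (Fin n), (ZA A * ρ).trace = c A := by
    intro A
    simp only [Matrix.trace, Matrix.diag_apply, ZA, Matrix.diagonal_mul, hc, chi]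
  have hc0 : c ∅ = 1 := by
    rw [← htrace]
    have : ZA (∅ : Finset (Fin n)) = 1 := by
      simp [ZA]
    rw [this, one_mul, hρt]
  -- Step A: Fourier expansion of f
  have stepA : ∀ x : V n, f x = ((2 : ℂ) ^ n)⁻¹ * ∑ A ∈ U, c A * chi A x := by
    intro x
    have hinv := aux_inversion (fun y => ρ y y) x
    have hsplit : ∑ A ∈ U, c A * chi A x + c ∅ * chi ∅ x
        = ∑ A : Finset (Fin n), c A * chi A x :=
      Finset.sum_erase_add Finset.univ _ (Finset.mem_univ ∅)
    have h3 : ∑ A : Finset (Fin n), c A * chi A x = (2 : ℂ) ^ n * ρ x x := hinv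
    have h4 : ∑ A ∈ U, c A * chi A x = (2 : ℂ) ^ n * ρ x x - 1 := by
      rw [← h3, ← hsplit, hc0, chi_empty]; ring
    rw [h4, hf]
    field_simp
  -- Step B: Parseval
  have stepB : ∑ x : V n, f x * (starRingEnd ℂ) (f x)
      = ((2 : ℂ) ^ n)⁻¹ * ∑ A ∈ U, c A * (starRingEnd ℂ) (c A) := by
    have hconjf : ∀ x : V n, (starRingEnd ℂ) (f x)
        = ((2 : ℂ) ^ n)⁻¹ * ∑ B ∈ U, (starRingEnd ℂ) (c B) * chi B x := by
      intro x
      rw [stepA x, _root_.map_mul, map_sum]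
      congr 1
      · simp [map_ofNat]
      · exact Finset.sum_congr rfl fun B _ => by rw [_root_.map_mul, conj_chi]
    have hSS : ∑ x : V n, (∑ A ∈ U, c A * chi A x) * (∑ B ∈ U, (starRingEnd ℂ) (c B) * chi B x)
        = (2 : ℂ) ^ n * ∑ A ∈ U, c A * (starRingEnd ℂ) (c A) := by
      have hterm : ∀ A B : Finset (Fin n),
          ∑ x : V n, (c A * chi A x) * ((starRingEnd ℂ) (c B) * chi B x)
          = c A * (starRingEnd ℂ) (c B) * (if A = B then (2 : ℂ) ^ n else 0) := by
        intro A B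
        rw [← chi_orth A B, Finset.mul_sum]
        exact Finset.sum_congr rfl fun x _ => by ring
      calc ∑ x : V n, (∑ A ∈ U, c A * chi A x) * (∑ B ∈ U, (starRingEnd ℂ) (c B) * chi B x)
          = ∑ x : V n, ∑ A ∈ U, ∑ B ∈ U, (c A * chi A x) * ((starRingEnd ℂ) (c B) * chi B x) := by
            exact Finset.sum_congr rfl fun x _ => Finset.sum_mul_sum U U _ _
        _ = ∑ A ∈ U, ∑ B ∈ U, ∑ x : V n, (c A * chi A x) * ((starRingEnd ℂ) (c B) * chi B x) := by
            rw [Finset.sum_comm]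
            exact Finset.sum_congr rfl fun A _ => Finset.sum_comm
        _ = ∑ A ∈ U, ∑ B ∈ U, c A * (starRingEnd ℂ) (c B) * (if A = B then (2 : ℂ) ^ n else 0) := by
            exact Finset.sum_congr rfl fun A _ => Finset.sum_congr rfl fun B _ => hterm A B
        _ = ∑ A ∈ U, c A * (starRingEnd ℂ) (c A) * (2 : ℂ) ^ n := by
            refine Finset.sum_congr rfl fun A hA => ?_
            simp only [mul_ite, mul_zero]
            rw [Finset.sum_ite_eq U A (fun B => c A * (starRingEnd ℂ) (c B) * (2 : ℂ) ^ n),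
              if_pos hA]
        _ = (2 : ℂ) ^ n * ∑ A ∈ U, c A * (starRingEnd ℂ) (c A) := by
            rw [← Finset.sum_mul, mul_comm]
    calc ∑ x : V n, f x * (starRingEnd ℂ) (f x)
        = ∑ x : V n, (((2 : ℂ) ^ n)⁻¹ * ∑ A ∈ U, c A * chi A x)
            * (((2 : ℂ) ^ n)⁻¹ * ∑ B ∈ U, (starRingEnd ℂ) (c B) * chi B x) := by
          exact Finset.sum_congr rfl fun x _ => by rw [hconjf x, stepA x]
      _ = ((2 : ℂ) ^ n)⁻¹ * ((2 : ℂ) ^ n)⁻¹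
            * ∑ x : V n, (∑ A ∈ U, c A * chi A x) * (∑ B ∈ U, (starRingEnd ℂ) (c B) * chi B x) := by
          rw [Finset.mul_sum]
          exact Finset.sum_congr rfl fun x _ => by ring
      _ = ((2 : ℂ) ^ n)⁻¹ * ∑ A ∈ U, c A * (starRingEnd ℂ) (c A) := by
          rw [hSS]
          field_simp
  -- real version
  have hreal : ∑ x : V n, Complex.normSq (f x)
      = ((2 : ℝ) ^ n)⁻¹ * ∑ A ∈ U, Complex.normSq (c A) := by
    have h := stepB
    simp only [Complex.mul_conj] at h
    have h2 : ((∑ x : V n, Complex.normSq (f x) : ℝ) : ℂ)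
        = ((((2 : ℝ) ^ n)⁻¹ * ∑ A ∈ U, Complex.normSq (c A) : ℝ) : ℂ) := by
      push_cast
      convert h using 2
    exact_mod_cast h2
  -- bound the Fourier coefficients
  have hrestrict : ∑ A ∈ U, Complex.normSq (c A) = ∑ A ∈ G.erase ∅, Complex.normSq (c A) := by
    refine (Finset.sum_subset ?_ ?_).symm
    · exact fun A hA => Finset.mem_erase.mpr ⟨(Finset.mem_erase.mp hA).1, Finset.mem_univ A⟩
    · intro A hAU hAG
      have hA1 : A ≠ ∅ := (Finset.mem_erase.mp hAU).1
      have hA2 : A ∉ G := fun h => hAG (Finset.mem_erase.mpr ⟨hA1, h⟩)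
      have := hout A hA2 hA1
      rw [htrace A] at this
      rw [this]
      simp
  have hcardG : ((G.erase ∅).card : ℝ) = (2 : ℝ) ^ k - 1 := by
    rw [Finset.card_erase_of_mem hGe, hGcard]
    have h1 : 1 ≤ 2 ^ k := Nat.one_le_two_pow
    push_cast [h1]
    ring
  have hbound : ∑ A ∈ U, Complex.normSq (c A) ≤ ((2 : ℝ) ^ k - 1) * ε ^ 2 := by
    rw [hrestrict]
    calc ∑ A ∈ G.erase ∅, Complex.normSq (c A) ≤ ∑ A ∈ G.erase ∅, ε ^ 2 := by
          refine Finset.sum_le_sum fun A hA => ?_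
          have h1 : A ∈ G := (Finset.mem_erase.mp hA).2
          have h2 : A ≠ ∅ := (Finset.mem_erase.mp hA).1
          have h3 := hin A h1 h2
          rw [htrace A] at h3
          rw [Complex.normSq_eq_norm_sq]
          exact pow_le_pow_left₀ (norm_nonneg _) h3 2
      _ = ((G.erase ∅).card : ℝ) * ε ^ 2 := by
          rw [Finset.sum_const, nsmul_eq_mul]
      _ = ((2 : ℝ) ^ k - 1) * ε ^ 2 := by rw [hcardG]
  -- hsNorm squared of diagonal matrix
  set D : Matrix (V n) (V n) ℂ := dephase ρ - ((2 : ℂ) ^ n)⁻¹ • 1 with hD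
  have hDdiag : D = Matrix.diagonal f := by
    ext i j
    by_cases h : i = j
    · subst h; simp [hD, dephase, Matrix.diagonal_apply_eq, Matrix.one_apply_eq, hf]
    · simp [hD, dephase, Matrix.diagonal_apply_ne _ h, Matrix.one_apply_ne h]
  have hsq : hsNorm D ^ 2 = ∑ x : V n, Complex.normSq (f x) := by
    rw [hsNorm, Real.sq_sqrt (by positivity)]
    refine Finset.sum_congr rfl fun i _ => ?_
    rw [hDdiag]
    have : ∀ j, ‖Matrix.diagonal f i j‖ ^ 2
        = if i = j then Complex.normSq (f i) else 0 := by
      intro j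
      by_cases h : i = j
      · subst h; simp [Matrix.diagonal_apply_eq, Complex.sq_norm]
      · simp [Matrix.diagonal_apply_ne _ h, h]
    simp only [this]
    simp
  have part2 : hsNorm D ^ 2 ≤ ((2 : ℝ) ^ n)⁻¹ * ((2 : ℝ) ^ k - 1) * ε ^ 2 := by
    rw [hsq, hreal, mul_assoc]
    have h0 : (0 : ℝ) ≤ ((2 : ℝ) ^ n)⁻¹ := by positivity
    exact mul_le_mul_of_nonneg_left hbound h0
  refine ⟨part2, ?_⟩
  -- Part 3
  have h2k : (0 : ℝ) ≤ (2 : ℝ) ^ k - 1 := by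
    have : (1 : ℝ) ≤ 2 ^ k := one_le_pow₀ (by norm_num)
    linarith
  have hhs0 : 0 ≤ hsNorm D := Real.sqrt_nonneg _
  have hhsle : hsNorm D ≤ Real.sqrt (((2 : ℝ) ^ n)⁻¹ * ((2 : ℝ) ^ k - 1) * ε ^ 2) := by
    have := Real.sqrt_le_sqrt part2
    rwa [Real.sqrt_sq hhs0] at this
  have h1 := aux_traceNorm_le D
  rw [hcard] at h1
  calc traceNorm D ≤ Real.sqrt ((2 : ℝ) ^ n) * hsNorm D := h1
    _ ≤ Real.sqrt ((2 : ℝ) ^ n) * Real.sqrt (((2 : ℝ) ^ n)⁻¹ * ((2 : ℝ) ^ k - 1) * ε ^ 2) :=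
        mul_le_mul_of_nonneg_left hhsle (Real.sqrt_nonneg _)
    _ = Real.sqrt ((2 : ℝ) ^ n * (((2 : ℝ) ^ n)⁻¹ * ((2 : ℝ) ^ k - 1) * ε ^ 2)) := by
        rw [← Real.sqrt_mul (by positivity)]
    _ = Real.sqrt (((2 : ℝ) ^ k - 1) * ε ^ 2) := by
        congr 1
        field_simp
    _ = Real.sqrt ((2 : ℝ) ^ k - 1) * ε := by
        rw [Real.sqrt_mul h2k, Real.sqrt_sq hε]
end

section
/- Let C = Σ_j α_j P_{(x_j,z_j)} be a real symmetric 2^n × 2^n matrix whose Pauli strings pairwise commute, and suppose the diagonal group D_C (the Z-strings in the group generated by the P_{(x_j,z_j)}) contains a nontrivial element Z_A with i ∈ A. Then no Pauli string of the form X_i Z_B (with i ∉ B) lies in the group generated by the P_{(x_j,z_j)}, and consequently for every k ≥ 1 and every pair of bitstrings y₁, y₂ differing exactly in coordinate i, ⟨y₁| C^k |y₂⟩ = 0; in graph terms, the graph with adjacency matrix C is disconnected. -/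
open Matrix

/-- The `n`-qubit Pauli string `P_(x,z)`. -/
noncomputable def pauli {ι : Type*} [Fintype ι] [DecidableEq ι] (x z : ι → Bool) :
    Matrix (ι → Bool) (ι → Bool) ℂ :=
  Matrix.of fun r s =>
    if r = fun j => xor (s j) (x j) then
      ∏ j, (Complex.I ^ (if x j = true ∧ z j = true then 1 else 0) *
        (-1 : ℂ) ^ (if z j = true ∧ s j = true then 1 else 0))
    else 0

noncomputable def eps {n : ℕ} (w s : Fin n → Bool) : ℂ :=
  ∏ j, (-1 : ℂ) ^ (if w j = true ∧ s j = true then 1 else 0)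

lemma pauli_z_eq_diagonal {n : ℕ} (w : Fin n → Bool) :
    pauli (fun _ => false) w = Matrix.diagonal (eps w) := by
  ext r s
  simp only [pauli, Matrix.of_apply, Matrix.diagonal, eps]
  have : (fun j => xor (s j) false) = s := by funext j; simp
  rw [this]
  by_cases h : r = s
  · subst h; simp
  · simp [h, Ne.symm h]

lemma eps_sq {n : ℕ} (w s : Fin n → Bool) : eps w s * eps w s = 1 := by
  rw [eps, ← Finset.prod_mul_distrib]
  apply Finset.prod_eq_one
  intro j _
  by_cases h : w j = true ∧ s j = true <;> simp [h]

lemma eps_ne {n : ℕ} (w : Fin n → Bool) (i : Fin n) (hwi : w i = true)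
    (y₁ y₂ : Fin n → Bool) (hj : ∀ j, j ≠ i → y₁ j = y₂ j) (hi : y₁ i ≠ y₂ i) :
    eps w y₁ ≠ eps w y₂ := by
  have hprod : eps w y₁ * eps w y₂ = -1 := by
    rw [eps, eps, ← Finset.prod_mul_distrib]
    rw [Finset.prod_eq_single i]
    · rcases Bool.eq_false_or_eq_true (y₁ i) with h1 | h1 <;>
      · have h2 := hi; simp [h1, hwi] at h2 ⊢; simp [h2]
    · intro j _ hji
      rw [hj j hji]
      by_cases h : w j = true ∧ y₂ j = true <;> simp [h]
    · intro h; exact absurd (Finset.mem_univ i) h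
  intro heq
  rw [heq, eps_sq] at hprod
  norm_num at hprod

lemma commute_of_mem_closure {M : Type*} [Monoid M] {S : Set M} (a : M)
    (h : ∀ s ∈ S, Commute a s) {x : M} (hx : x ∈ Submonoid.closure S) : Commute a x := by
  induction hx using Submonoid.closure_induction with
  | mem s hs => exact h s hs
  | one => exact Commute.one_right a
  | mul x y _ _ hx hy => exact hx.mul_right hy

lemma diag_commute_entry {n : ℕ} {d : (Fin n → Bool) → ℂ}
    {A : Matrix (Fin n → Bool) (Fin n → Bool) ℂ}
    (h : Commute (Matrix.diagonal d) A) (r s : Fin n → Bool) (hne : d r ≠ d s) :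
    A r s = 0 := by
  have := congrFun (congrFun h.eq r) s
  rw [Matrix.diagonal_mul, Matrix.mul_diagonal] at this
  have h2 : (d r - d s) * A r s = 0 := by ring_nf; linear_combination this
  rcases mul_eq_zero.mp h2 with h3 | h3
  · exact absurd (sub_eq_zero.mp h3) hne
  · exact h3

lemma eps_const_on_walk {n : ℕ} (G : SimpleGraph (Fin n → Bool)) (f : (Fin n → Bool) → ℂ)
    (h : ∀ a b, G.Adj a b → f a = f b) {u v : Fin n → Bool} (p : G.Walk u v) : f u = f v := by
  induction p with
  | nil => rfl
  | cons ha _ ih => exact (h _ _ ha).trans ih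

/-- If `C = Σⱼ αⱼ P_(xⱼ,zⱼ)` has pairwise commuting Pauli strings and its diagonal group
contains a nontrivial Z-string `Z_w` with `w i = 1`, then no Pauli of the form `Xᵢ Z_B`
(`i ∉ B`) lies in the generated group, every matrix power `Cᵏ` vanishes between bitstrings
differing exactly at coordinate `i`, and the graph with adjacency structure given by the
nonzero off-diagonal entries of `C` is disconnected. -/
theorem stmt_13 (n m : ℕ) (α : Fin m → ℝ) (xs zs : Fin m → (Fin n → Bool))
    (hcomm : ∀ j j' : Fin m, Commute (pauli (xs j) (zs j)) (pauli (xs j') (zs j')))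
    (C : Matrix (V n) (V n) ℂ) (hCdef : C = ∑ j, (α j : ℂ) • pauli (xs j) (zs j))
    (hsymm : C.IsSymm) (hherm : C.IsHermitian)
    (w : Fin n → Bool) (i : Fin n) (hwi : w i = true)
    (hZ : ∃ c : ℂ, c ^ 4 = 1 ∧ c • pauli (fun _ => false) w ∈
        Submonoid.closure (Set.range fun j => pauli (xs j) (zs j))) :
    (∀ B : Fin n → Bool, B i = false → ∀ c : ℂ, c ^ 4 = 1 →
      ¬ c • pauli (fun j => decide (j = i)) B ∈
          Submonoid.closure (Set.range fun j => pauli (xs j) (zs j))) ∧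
    (∀ k : ℕ, 1 ≤ k → ∀ y₁ y₂ : V n, (∀ j, j ≠ i → y₁ j = y₂ j) → y₁ i ≠ y₂ i →
      (C ^ k) y₁ y₂ = 0) ∧
    ¬ (SimpleGraph.fromRel fun r s : V n => C r s ≠ 0).Connected := by
  obtain ⟨c, hc4, hcmem⟩ := hZ
  have hc0 : c ≠ 0 := by intro h; rw [h] at hc4; norm_num at hc4
  set S := Set.range fun j => pauli (xs j) (zs j) with hS
  -- each generator commutes with all of the closure
  have hgen : ∀ g ∈ S, ∀ x ∈ Submonoid.closure S, Commute g x := by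
    intro g hg x hx
    refine commute_of_mem_closure g ?_ hx
    rintro s ⟨j', rfl⟩
    obtain ⟨j, rfl⟩ := hg
    exact hcomm j j'
  -- Z_w commutes with all of the closure
  have hZcomm : ∀ x ∈ Submonoid.closure S, Commute (Matrix.diagonal (eps w)) x := by
    intro x hx
    have h1 : Commute (c • pauli (fun _ => false) w) x :=
      commute_of_mem_closure _ (fun s hs => ((hgen s hs) _ hcmem).symm) hx
    have h2 := h1.eq
    rw [smul_mul_assoc, mul_smul_comm] at h2
    have h3 : pauli (fun _ => false) w * x = x * pauli (fun _ => false) w :=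
      smul_right_injective _ hc0 h2
    rwa [pauli_z_eq_diagonal] at h3
  -- C commutes with Z_w
  have hCcomm : Commute (Matrix.diagonal (eps w)) C := by
    rw [hCdef]
    refine Commute.sum_right _ _ _ fun j _ => ?_
    exact (hZcomm _ (Submonoid.subset_closure ⟨j, rfl⟩)).smul_right _
  refine ⟨?_, ?_, ?_⟩
  · -- part 1
    intro B hB c' hc4' hmem
    have hc0' : c' ≠ 0 := by intro h; rw [h] at hc4'; norm_num at hc4'
    have h1 := (hZcomm _ hmem).eq
    rw [mul_smul_comm, smul_mul_assoc] at h1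
    have h2 : Matrix.diagonal (eps w) * pauli (fun j => decide (j = i)) B =
        pauli (fun j => decide (j = i)) B * Matrix.diagonal (eps w) :=
      smul_right_injective _ hc0' h1
    set r₀ : V n := fun j => decide (j = i) with hr₀
    set s₀ : V n := fun _ => false with hs₀
    have hne : eps w r₀ ≠ eps w s₀ := by
      refine eps_ne w i hwi r₀ s₀ (fun j hj => by simp [hr₀, hs₀, hj]) (by simp [hr₀, hs₀])
    have hzero := diag_commute_entry h2 r₀ s₀ hne
    have hone : pauli (fun j => decide (j = i)) B r₀ s₀ = 1 := by
      simp only [pauli, Matrix.of_apply]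
      rw [if_pos (by funext j; simp [hr₀, hs₀])]
      apply Finset.prod_eq_one
      intro j _
      by_cases hji : j = i
      · subst hji; simp [hB, hs₀]
      · simp [hji, hs₀]
    rw [hzero] at hone
    exact one_ne_zero hone.symm
  · -- part 2
    intro k _ y₁ y₂ hj hi
    exact diag_commute_entry (hCcomm.pow_right k) y₁ y₂ (eps_ne w i hwi y₁ y₂ hj hi)
  · -- part 3
    intro hconn
    have hCentry : ∀ r s : V n, eps w r ≠ eps w s → C r s = 0 :=
      fun r s h => diag_commute_entry hCcomm r s h
    set y₂ : V n := fun j => decide (j = i) with hy₂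
    obtain ⟨p⟩ := hconn.preconnected (fun _ => false) y₂
    have heq : eps w (fun _ => false) = eps w y₂ := by
      refine eps_const_on_walk _ _ ?_ p
      intro a b hab
      rw [SimpleGraph.fromRel_adj] at hab
      by_contra hne
      rcases hab.2 with h | h
      · exact h (hCentry a b hne)
      · exact h (hCentry b a (Ne.symm hne))
    exact eps_ne w i hwi (fun _ => false) y₂ (fun j hj => by simp [hy₂, hj]) (by simp [hy₂]) heq
end
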